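/- arXiv:2109.13310 — 2 statements merged into one kernel-verified Lean document; each statement's English description precedes it below -/
import Mathlib

section
/- Let a group $G$ act freely on a set $X$, let $C \leq G$ be a subgroup, let $\gamma \subseteq X$ be a subset with $c\gamma = \gamma$ for all $c \in C$, and let $g \in G$ with $g^2 = 1$. Let $\tilde{S} = \langle \overline{S}, g \rangle$ where $\overline{S} = \{c \in C : \exists d \in C,\; cgd^{-1} = g\}$. Then the set $\gamma \cap g\gamma$ is invariant under $\tilde{S}$; consequently, if $\gamma \cap g\gamma$ is finite and $C$ is finite, then $|\tilde{S}|$ divides $|\gamma \cap g\gamma|$. -/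
open Pointwise in
/-- for a free `G`-action, a `C`-invariant set `γ` and `g` with `g² = 1`,
the set `γ ∩ gγ` is `S̃ = ⟨S̄, g⟩`-invariant, so if finite its cardinality is divisible
by `|S̃|`. -/
theorem stmt_4 {G X : Type*} [Group G] [MulAction G X]
    (hfree : ∀ (h : G) (x : X), h • x = x → h = 1)
    (C : Subgroup G) [Finite C] (hcyc : IsCyclic C)
    (g : G) (hg : g ^ 2 = 1)
    (γ : Set X) (hγ : ∀ c ∈ C, c • γ = γ) :
    let Sbar : Set G := {c | c ∈ C ∧ ∃ d ∈ C, c * g * d⁻¹ = g}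
    let Stilde : Subgroup G := Subgroup.closure (Sbar ∪ {g})
    (∀ h ∈ Stilde, h • (γ ∩ g • γ) = γ ∩ g • γ) ∧
    ((γ ∩ g • γ).Finite → Nat.card ↥Stilde ∣ (γ ∩ g • γ).ncard) := by
  intro Sbar Stilde
  have hgg : g * g = 1 := by rw [← sq]; exact hg
  set s : Set X := γ ∩ g • γ with hs
  -- invariance
  have hinv : ∀ h ∈ Stilde, h • s = s := by
    intro h hh
    induction hh using Subgroup.closure_induction with
    | mem x hx =>
      rcases hx with hx | hx
      · obtain ⟨hxC, d, hdC, hd⟩ := hx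
        have hxg : x * g = g * d := mul_inv_eq_iff_eq_mul.mp hd
        have key : x • g • γ = g • γ := by
          rw [smul_smul, hxg, ← smul_smul, hγ d hdC]
        rw [hs, Set.smul_set_inter, hγ x hxC, key]
      · simp only [Set.mem_singleton_iff] at hx
        have h2 : g • g • γ = γ := by rw [smul_smul, hgg, one_smul]
        rw [hs, hx, Set.smul_set_inter, h2, Set.inter_comm]
    | one => rw [one_smul]
    | mul x y hx hy px py => rw [← smul_smul, py, px]
    | inv x hx px =>
      conv_lhs => rw [← px]
      rw [smul_smul, inv_mul_cancel, one_smul]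
  refine ⟨hinv, ?_⟩
  intro hfin
  -- the action of Stilde on s
  letI actInst : MulAction ↥Stilde ↥s :=
    { smul := fun k x => ⟨(k : G) • (x : X), by
        have hmem := Set.smul_mem_smul_set (a := (k : G)) x.2
        rwa [hinv k.1 k.2] at hmem⟩
      one_smul := fun x => Subtype.ext (one_smul G (x : X))
      mul_smul := fun a b x => Subtype.ext (mul_smul (a : G) (b : G) (x : X)) }
  have hstab : ∀ x : ↥s, MulAction.stabilizer ↥Stilde x = ⊥ := by
    intro x
    ext k
    simp only [MulAction.mem_stabilizer_iff, Subgroup.mem_bot]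
    constructor
    · intro hk
      have hk' : (k : G) • (x : X) = (x : X) := congrArg Subtype.val hk
      exact Subtype.ext (hfree _ _ hk')
    · rintro rfl; exact one_smul _ _
  have e0 := MulAction.selfEquivSigmaOrbitsQuotientStabilizer ↥Stilde ↥s
  have e1 : ∀ ω : MulAction.orbitRel.Quotient ↥Stilde ↥s,
      (↥Stilde ⧸ MulAction.stabilizer ↥Stilde ω.out) ≃ ↥Stilde := fun ω =>
    (Subgroup.quotientEquivOfEq (hstab ω.out)).trans
      (QuotientGroup.quotientBot (G := ↥Stilde)).toEquiv
  have e : ↥s ≃ (MulAction.orbitRel.Quotient ↥Stilde ↥s) × ↥Stilde :=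
    e0.trans ((Equiv.sigmaCongrRight e1).trans (Equiv.sigmaEquivProd _ _))
  have hcard : Nat.card ↥s =
      Nat.card (MulAction.orbitRel.Quotient ↥Stilde ↥s) * Nat.card ↥Stilde := by
    rw [Nat.card_congr e, Nat.card_prod]
  rw [← Nat.card_coe_set_eq, hcard]
  exact dvd_mul_left _ _
end

section
/- Let $G$ be a group, $C \leq G$ a finite subgroup with $\zeta = \sum_{h \in C} h$, and let $a = \sum_{f \in G} c_f f \in \mathbb{Z}[G]$ (finite support). Then for every $g \in G$, the coefficient of $g$ in $\zeta a \zeta$ equals $|\mathrm{Stab}_{C \times C}(g)| \cdot \sum_{f \in CgC} c_f$, where $C \times C$ acts on $G$ by $(c,d)\cdot x = cxd^{-1}$. In particular, $\zeta a \zeta = 0$ if and only if $\sum_{f \in D} c_f = 0$ for every double coset $D$ of $C$ in $G$. -/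
/-- the coefficient of `g` in `ζ a ζ` is `|Stab_{C×C}(g)| · ∑_{f ∈ CgC} c_f`;
in particular `ζ a ζ = 0` iff the coefficient sums over all double cosets vanish. -/
theorem stmt_9 {G : Type*} [Group G] (C : Subgroup G) [Fintype C]
    (a : MonoidAlgebra ℤ G) :
    let ζ : MonoidAlgebra ℤ G := ∑ h : C, MonoidAlgebra.single (h : G) (1 : ℤ)
    (∀ g : G, (ζ * a * ζ).coeff g =
        (Nat.card {p : C × C // (p.1 : G) * g * ((p.2 : G))⁻¹ = g} : ℤ) *
          ∑ᶠ f ∈ {y : G | ∃ c ∈ C, ∃ d ∈ C, y = c * g * d}, a.coeff f) ∧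
    (ζ * a * ζ = 0 ↔
      ∀ g : G, ∑ᶠ f ∈ {y : G | ∃ c ∈ C, ∃ d ∈ C, y = c * g * d}, a.coeff f = 0) := by
  classical
  intro ζ
  have key : ∀ g : G, (ζ * a * ζ).coeff g =
      (Nat.card {p : C × C // (p.1 : G) * g * ((p.2 : G))⁻¹ = g} : ℤ) *
        ∑ᶠ f ∈ {y : G | ∃ c ∈ C, ∃ d ∈ C, y = c * g * d}, a.coeff f := by
    intro g
    set φ : C × C → G := fun p => (p.1 : G) * g * (p.2 : G)⁻¹ with hφ
    have hA : (ζ * a * ζ).coeff g = ∑ p : C × C, a.coeff (φ p) := by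
      have h1 : ζ * a * ζ = ∑ c : C, ∑ d : C,
          MonoidAlgebra.single (c : G) (1 : ℤ) * a * MonoidAlgebra.single (d : G) (1 : ℤ) := by
        simp only [ζ, Finset.sum_mul, Finset.mul_sum]
        rw [Finset.sum_comm]
      rw [h1, Fintype.sum_prod_type]
      rw [show (∑ c : C, ∑ d : C,
          MonoidAlgebra.single (c : G) (1 : ℤ) * a * MonoidAlgebra.single (d : G) (1 : ℤ)).coeff g
          = ∑ c : C, (∑ d : C,
          MonoidAlgebra.single (c : G) (1 : ℤ) * a * MonoidAlgebra.single (d : G) (1 : ℤ)).coeff g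
          from by simp only [MonoidAlgebra.coeff_sum, Finset.sum_apply']]
      refine Fintype.sum_equiv (Equiv.inv C) _ _ fun c => ?_
      rw [show (∑ d : C,
          MonoidAlgebra.single (c : G) (1 : ℤ) * a * MonoidAlgebra.single (d : G) (1 : ℤ)).coeff g
          = ∑ d : C, (MonoidAlgebra.single (c : G) (1 : ℤ) * a
              * MonoidAlgebra.single (d : G) (1 : ℤ)).coeff g
          from by simp only [MonoidAlgebra.coeff_sum, Finset.sum_apply']]
      refine Finset.sum_congr rfl fun d _ => ?_
      simp [hφ, MonoidAlgebra.coeff_single_mul_apply, MonoidAlgebra.coeff_mul_single_apply, mul_assoc]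
    have hset : {y : G | ∃ c ∈ C, ∃ d ∈ C, y = c * g * d}
        = ↑(Finset.image φ Finset.univ) := by
      ext y
      simp only [Set.mem_setOf_eq, Finset.coe_image, Finset.coe_univ, Set.image_univ,
        Set.mem_range]
      constructor
      · rintro ⟨c, hc, d, hd, rfl⟩
        exact ⟨(⟨c, hc⟩, ⟨d⁻¹, inv_mem hd⟩), by simp [hφ]⟩
      · rintro ⟨p, rfl⟩
        exact ⟨p.1, p.1.2, (p.2 : G)⁻¹, inv_mem p.2.2, by simp [hφ]⟩
    have hcard : ∀ y ∈ Finset.image φ Finset.univ,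
        (Finset.univ.filter fun p => φ p = y).card
          = Nat.card {p : C × C // (p.1 : G) * g * ((p.2 : G))⁻¹ = g} := by
      intro y hy
      obtain ⟨p₀, -, hp₀⟩ := Finset.mem_image.mp hy
      rw [Nat.card_eq_fintype_card, Fintype.card_subtype]
      refine Finset.card_nbij' (fun p => p₀⁻¹ * p) (fun q => p₀ * q) ?_ ?_ ?_ ?_
      · intro p hp
        simp only [Finset.mem_coe, Finset.mem_filter, Finset.mem_univ, true_and] at hp ⊢
        have hp' : (p.1 : G) * g * (p.2 : G)⁻¹ = (p₀.1 : G) * g * (p₀.2 : G)⁻¹ :=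
          hp.trans hp₀.symm
        show ((p₀⁻¹ * p).1 : G) * g * (((p₀⁻¹ * p).2 : G))⁻¹ = g
        have : ((p₀⁻¹ * p).1 : G) * g * (((p₀⁻¹ * p).2 : G))⁻¹
            = (p₀.1 : G)⁻¹ * ((p.1 : G) * g * (p.2 : G)⁻¹) * (p₀.2 : G) := by
          simp only [Prod.fst_mul, Prod.snd_mul, Prod.fst_inv, Prod.snd_inv,
            Subgroup.coe_mul, InvMemClass.coe_inv]
          group
        rw [this, hp']
        group
      · intro q hq
        simp only [Finset.mem_coe, Finset.mem_filter, Finset.mem_univ, true_and] at hq ⊢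
        have : φ (p₀ * q) = (p₀.1 : G) * ((q.1 : G) * g * (q.2 : G)⁻¹) * (p₀.2 : G)⁻¹ := by
          simp only [hφ, Prod.fst_mul, Prod.snd_mul, Subgroup.coe_mul]
          group
        rw [this, hq]
        exact hp₀
      · intro p _; group
      · intro q _; group
    rw [hA, hset, finsum_mem_coe_finset, Finset.sum_comp]
    rw [Finset.mul_sum]
    refine Finset.sum_congr rfl fun y hy => ?_
    rw [hcard y hy, nsmul_eq_mul]
  refine ⟨key, ?_⟩
  have hN : ∀ g : G,
      (Nat.card {p : C × C // (p.1 : G) * g * ((p.2 : G))⁻¹ = g} : ℤ) ≠ 0 := by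
    intro g
    have : Nonempty {p : C × C // (p.1 : G) * g * ((p.2 : G))⁻¹ = g} := ⟨⟨(1, 1), by simp⟩⟩
    exact_mod_cast Nat.card_pos.ne'
  constructor
  · intro h0 g
    have hk := key g
    rw [h0] at hk
    have := (mul_eq_zero.mp hk.symm).resolve_left (hN g)
    exact this
  · intro h
    ext g
    rw [key g, h g, mul_zero]
    rfl
end
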